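/- For the diffusion-based SSL model g(L) = H·Y_L, the entrywise L1 distance between the nominal and anomaly-affected expected label-distribution matrices satisfies ‖P_N − P_A‖₁ = (f_A / |L̄ᶜ_S|) · ‖ (K/(N−K)) · Σ_{n ∉ A} h_n·y_nᵀ − Σ_{n ∈ A} h_n·y_nᵀ ‖₁, where f_A = C(N−1, S−1) and h_n·y_nᵀ denotes the outer product of the n-th column of H with the label row vector y_n. (Corollary 1) -/

import Mathlib

/-!
`H · Y_L = ∑_{n ∈ L} h_n y_nᵀ`, and every element of `T` lies in the fraction `S / |T|` of the
`S`-subsets of `T`, so the mean of `g` over the `S`-subsets of `T` is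
`(S / |T|) · ∑_{n ∈ T} h_n y_nᵀ`. The clean sets are the `S`-subsets of `Aᶜ` and the
contaminated ones are the rest of `L_S`, so `P_N - P_A = (|L_S| / |L̄ᶜ_S|) · (P_N - P)`, where
`P` is the mean over all of `L_S`. Finally
`P_N - P = (S / N) · ((K / (N - K)) · ∑_{n ∉ A} h_n y_nᵀ - ∑_{n ∈ A} h_n y_nᵀ)`
and `|L_S| · S / N = C(N - 1, S - 1)`.
-/

open Finset

noncomputable def entryL1 {N C : ℕ} (Z : Matrix (Fin N) (Fin C) ℝ) : ℝ :=
  ∑ i, ∑ j, |Z i j|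

theorem Nat.mul_choose_sub_one_sub_one {n k : ℕ} (hn : 0 < n) (hk : 0 < k) :
    n * (n - 1).choose (k - 1) = k * n.choose k := by
  obtain ⟨m, rfl⟩ : ∃ m, n = m + 1 := ⟨n - 1, by omega⟩
  obtain ⟨j, rfl⟩ : ∃ j, k = j + 1 := ⟨k - 1, by omega⟩
  rw [Nat.add_sub_cancel, Nat.add_sub_cancel, Nat.add_one_mul_choose_eq, mul_comm]

theorem Nat.choose_lt_choose_left {m n k : ℕ} (hk : 0 < k) (hkm : k ≤ m) (hmn : m < n) :
    m.choose k < n.choose k := by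
  obtain ⟨j, rfl⟩ : ∃ j, k = j + 1 := ⟨k - 1, by omega⟩
  calc m.choose (j + 1) < (m + 1).choose (j + 1) := by
        have := Nat.choose_pos (show j ≤ m by omega)
        rw [Nat.choose_succ_succ']
        omega
    _ ≤ n.choose (j + 1) := Nat.choose_le_choose _ hmn

theorem Finset.card_filter_mem_powersetCard {α : Type*} [DecidableEq α] {T : Finset α} {a : α}
    (ha : a ∈ T) {k : ℕ} (hk : 0 < k) :
    #((T.powersetCard k).filter (a ∈ ·)) = (#T - 1).choose (k - 1) := by
  simpa only [singleton_subset_iff, card_singleton] using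
    card_filter_powersetCard_subset {a} T k (singleton_subset_iff.2 ha) hk

theorem Finset.sum_powersetCard_sum {α M : Type*} [DecidableEq α] [AddCommMonoid M]
    (T : Finset α) {k : ℕ} (hk : 0 < k) (f : α → M) :
    ∑ L ∈ T.powersetCard k, ∑ n ∈ L, f n = (#T - 1).choose (k - 1) • ∑ n ∈ T, f n := by
  rw [sum_comm' (t' := T) (s' := fun n => (T.powersetCard k).filter (n ∈ ·)), smul_sum]
  · refine sum_congr rfl fun n hn => ?_
    rw [sum_const, card_filter_mem_powersetCard hn hk]
  · intro L n
    simp only [mem_filter, mem_powersetCard]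
    exact ⟨fun h => ⟨h, h.1.1 h.2⟩, And.left⟩

theorem Finset.filter_inter_eq_empty_powersetCard_univ {α : Type*} [Fintype α] [DecidableEq α]
    (A : Finset α) (k : ℕ) :
    (powersetCard k univ).filter (fun L => L ∩ A = ∅) = powersetCard k Aᶜ := by
  ext L
  simp only [mem_filter, mem_powersetCard, subset_univ, true_and, subset_compl_iff_disjoint_right,
    ← disjoint_iff_inter_eq_empty, and_comm]

theorem Finset.inv_card_smul_sum_powersetCard_sum {α E : Type*} [DecidableEq α] [AddCommGroup E]
    [Module ℝ E] {T : Finset α} {k : ℕ} (hk : 0 < k) (hkT : k ≤ #T) (f : α → E) :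
    (#(T.powersetCard k) : ℝ)⁻¹ • ∑ L ∈ T.powersetCard k, ∑ n ∈ L, f n =
      ((k : ℝ) / #T) • ∑ n ∈ T, f n := by
  have hdouble : (#T : ℝ) * (#T - 1).choose (k - 1) = k * (#T).choose k := by
    exact_mod_cast Nat.mul_choose_sub_one_sub_one (by omega) hk
  have hT : (#T : ℝ) ≠ 0 := by exact_mod_cast (by omega : #T ≠ 0)
  have hchoose : ((#T).choose k : ℝ) ≠ 0 := by exact_mod_cast (Nat.choose_pos hkT).ne'
  rw [sum_powersetCard_sum T hk, card_powersetCard, ← Nat.cast_smul_eq_nsmul ℝ, smul_smul]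
  congr 1
  field_simp
  linear_combination hdouble

theorem Finset.inv_card_smul_sum_sub_inv_card_smul_sum_sdiff {ι E : Type*} [DecidableEq ι]
    [AddCommGroup E] [Module ℝ E] {F₁ F : Finset ι} (h : F₁ ⊆ F) (h₁ : F₁.Nonempty)
    (h₂ : (F \ F₁).Nonempty) (g : ι → E) :
    (#F₁ : ℝ)⁻¹ • ∑ L ∈ F₁, g L - (#(F \ F₁) : ℝ)⁻¹ • ∑ L ∈ F \ F₁, g L =
      ((#F : ℝ) / #(F \ F₁)) • ((#F₁ : ℝ)⁻¹ • ∑ L ∈ F₁, g L - (#F : ℝ)⁻¹ • ∑ L ∈ F, g L) := by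
  have hcard : (#F : ℝ) = #F₁ + #(F \ F₁) := by
    rw [← card_sdiff_add_card_eq_card h, Nat.cast_add, add_comm]
  have h₁ : (#F₁ : ℝ) ≠ 0 := by exact_mod_cast h₁.card_pos.ne'
  have h₂ : (#(F \ F₁) : ℝ) ≠ 0 := by exact_mod_cast h₂.card_pos.ne'
  rw [sum_sdiff_eq_sub h, hcard]
  match_scalars
  · field_simp
    ring
  · field_simp

theorem inv_card_smul_sum_clean_sub_inv_card_smul_sum_contaminated {α E : Type*} [Fintype α]
    [DecidableEq α] [AddCommGroup E] [Module ℝ E] {A : Finset α} (hA : A.Nonempty) {S : ℕ}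
    (hS : 0 < S) (hSA : S ≤ #Aᶜ) (B : α → E) :
    (#(powersetCard S Aᶜ) : ℝ)⁻¹ • ∑ L ∈ powersetCard S Aᶜ, ∑ n ∈ L, B n -
        (#(powersetCard S univ \ powersetCard S Aᶜ) : ℝ)⁻¹ •
          ∑ L ∈ powersetCard S univ \ powersetCard S Aᶜ, ∑ n ∈ L, B n =
      (((Fintype.card α - 1).choose (S - 1) : ℝ) / #(powersetCard S univ \ powersetCard S Aᶜ)) •
        (((#A : ℝ) / #Aᶜ) • ∑ n ∈ Aᶜ, B n - ∑ n ∈ A, B n) := by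
  have hcard : Fintype.card α = #A + #Aᶜ := by
    rw [card_compl]; have := card_le_univ A; omega
  have hsub : powersetCard S Aᶜ ⊆ powersetCard S univ := powersetCard_mono (subset_univ _)
  have hclean : (powersetCard S Aᶜ).Nonempty := powersetCard_nonempty.2 hSA
  have hcontaminated : (powersetCard S univ \ powersetCard S Aᶜ).Nonempty := by
    rw [sdiff_nonempty]
    intro hle
    have := card_le_card hle
    rw [card_powersetCard, card_powersetCard, card_univ] at this
    have := Nat.choose_lt_choose_left (n := Fintype.card α) hS hSA (by have := hA.card_pos; omega)
    omega
  have hdouble : (Fintype.card α : ℝ) * (Fintype.card α - 1).choose (S - 1) =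
      S * (Fintype.card α).choose S := by
    exact_mod_cast Nat.mul_choose_sub_one_sub_one (by omega) hS
  rw [inv_card_smul_sum_sub_inv_card_smul_sum_sdiff hsub hclean hcontaminated,
    inv_card_smul_sum_powersetCard_sum hS hSA,
    inv_card_smul_sum_powersetCard_sum hS (hSA.trans (card_le_univ _)), card_univ,
    ← sum_add_sum_compl A B, card_powersetCard, card_univ]
  have hcard' : (Fintype.card α : ℝ) = #A + #Aᶜ := by exact_mod_cast hcard
  have hN : (Fintype.card α : ℝ) ≠ 0 := by exact_mod_cast (by omega : Fintype.card α ≠ 0)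
  have hM : (#Aᶜ : ℝ) ≠ 0 := by exact_mod_cast (by omega : #Aᶜ ≠ 0)
  have hd : (#(powersetCard S univ \ powersetCard S Aᶜ) : ℝ) ≠ 0 := by
    exact_mod_cast hcontaminated.card_pos.ne'
  match_scalars
  · field_simp
    linear_combination ((Fintype.card α).choose S * S : ℝ) * hcard' - (#A : ℝ) * hdouble
  · field_simp
    linear_combination hdouble

theorem Matrix.mul_of_ite_mem_eq_sum_vecMulVec {l m n α : Type*} [Fintype m] [DecidableEq m]
    [NonUnitalNonAssocSemiring α] (H : Matrix l m α) (L : Finset m) (y : m → n → α) :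
    H * of (fun k c => if k ∈ L then y k c else 0) = ∑ k ∈ L, vecMulVec (fun i => H i k) (y k) := by
  ext i c
  simp only [mul_apply, of_apply, mul_ite, mul_zero, sum_ite_mem, univ_inter, sum_apply,
    vecMulVec_apply]

theorem entryL1_smul {N C : ℕ} (c : ℝ) (Z : Matrix (Fin N) (Fin C) ℝ) :
    entryL1 (c • Z) = |c| * entryL1 Z := by
  simp only [entryL1, Matrix.smul_apply, smul_eq_mul, abs_mul, mul_sum]

/-- **Corollary 1 (GraphSAC, diffusion-based SSL).** For the diffusion-based
SSL model `g(L) = H·Y_L`, the entrywise L1 distance between the nominal and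
anomaly-affected expected label-distribution matrices satisfies
`‖P_N − P_A‖₁ = (f_A/|L̄ᶜ_S|) · ‖(K/(N−K))·Σ_{n∉A} h_n·y_nᵀ − Σ_{n∈A} h_n·y_nᵀ‖₁`,
where `f_A = C(N−1, S−1)` and `h_n·y_nᵀ` is the outer product of the `n`-th
column of `H` with the label row vector `y_n`. -/
theorem graphsac_corollary1 {N C K S : ℕ}
    (hK : 1 ≤ K) (hS : 1 ≤ S) (hSNK : S ≤ N - K)
    (A : Finset (Fin N)) (hA : A.card = K)
    (y : Fin N → Fin C → ℝ)
    (Y : Finset (Fin N) → Matrix (Fin N) (Fin C) ℝ)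
    (hY : ∀ L, Y L = Matrix.of fun n c => if n ∈ L then y n c else 0)
    (H : Matrix (Fin N) (Fin N) ℝ)
    (g : Finset (Fin N) → Matrix (Fin N) (Fin C) ℝ)
    (hg : ∀ L, g L = H * Y L)
    (LS LbarS LbarcS : Finset (Finset (Fin N)))
    (hLS : LS = Finset.powersetCard S (Finset.univ : Finset (Fin N)))
    (hLbarS : LbarS = LS.filter (fun L => L ∩ A = ∅))
    (hLbarcS : LbarcS = LS \ LbarS)
    (PN PA : Matrix (Fin N) (Fin C) ℝ)
    (hPN : PN = ((LbarS.card : ℝ))⁻¹ • ∑ L ∈ LbarS, g L)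
    (hPA : PA = ((LbarcS.card : ℝ))⁻¹ • ∑ L ∈ LbarcS, g L) :
    entryL1 (PN - PA) =
      (((N - 1).choose (S - 1) : ℝ) / (LbarcS.card : ℝ)) *
        entryL1 (((K : ℝ) / ((N - K : ℕ) : ℝ)) •
            ∑ n ∈ Aᶜ, Matrix.vecMulVec (fun i => H i n) (y n) -
          ∑ n ∈ A, Matrix.vecMulVec (fun i => H i n) (y n)) := by
  set B : Fin N → Matrix (Fin N) (Fin C) ℝ := fun n => Matrix.vecMulVec (fun i => H i n) (y n)
  have hgB (L : Finset (Fin N)) : g L = ∑ n ∈ L, B n := by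
    rw [hg, hY, Matrix.mul_of_ite_mem_eq_sum_vecMulVec]
  have hcompl : #Aᶜ = N - K := by rw [card_compl, Fintype.card_fin, hA]
  subst hLS hLbarS hLbarcS hPN hPA
  simp only [filter_inter_eq_empty_powersetCard_univ, hgB]
  rw [inv_card_smul_sum_clean_sub_inv_card_smul_sum_contaminated (card_pos.1 (by omega)) hS
      (hcompl ▸ hSNK), entryL1_smul, abs_of_nonneg (by positivity), Fintype.card_fin, hcompl, hA]
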